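/- arXiv:2304.09705 — 2 statements merged into one kernel-verified Lean document; each statement's English description precedes it below -/
import Mathlib

section
/- Let X be a nonnegative random variable that is regularly varying with index α > 1, let L be an ℕ-valued random variable (possibly dependent on X) with E[L] < 1, and let H, H_1, H_2, … be identically distributed nonnegative random variables such that (H_j)_{j≥1} is an i.i.d. sequence independent of the pair (X, L) and H has the same distribution as max(X, max_{1≤j≤L} H_j) (with the maximum over an empty index set equal to 0). Then P(H > x) / P(X > x) → 1/(1 − E[L]) as x → ∞; in particular H is regularly varying with index α. -/
open MeasureTheory ProbabilityTheory Filter Topology Asymptotics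

/-- `tailP P Z x = P(Z > x)` as a real number. -/
noncomputable def tailP {Ω : Type*} [MeasurableSpace Ω] (P : Measure Ω) (Z : Ω → ℝ) (x : ℝ) : ℝ :=
  (P {ω | x < Z ω}).toReal

/-- A positive measurable function `L` is slowly varying if `L(cx)/L(x) → 1` for every `c > 0`. -/
def SlowlyVarying (L : ℝ → ℝ) : Prop :=
  (∀ x > 0, 0 < L x) ∧ ∀ c > 0, Tendsto (fun x => L (c * x) / L x) atTop (𝓝 1)

/-- A nonnegative random variable `Z` is regularly varying with index `α` if
`P(Z > x) = x^{-α} L(x)` for all `x > 0`, with `L` slowly varying. -/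
def RegVarying {Ω : Type*} [MeasurableSpace Ω] (P : Measure Ω) (Z : Ω → ℝ) (α : ℝ) : Prop :=
  ∃ L : ℝ → ℝ, Measurable L ∧ SlowlyVarying L ∧ ∀ x > 0, tailP P Z x = x ^ (-α) * L x


/-!
Fix `x > 0` and put `q = P(H ≤ x)`, `t = P(H > x) = 1 - q`. Splitting according to the value of
`L` and using the independence of `(X, L)` and the i.i.d. copies `Hⱼ`, the fixed-point equation
gives `q = P(max(X, H₁, …, H_L) ≤ x) = E[1{X ≤ x} q^L]`. Since `1 - q^L = t ∑_{i<L} q^i`, this turns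
into the exact identity `P(H > x) = P(X > x) + P(H > x) w(x)` with
`w(x) = E[1{X ≤ x} ∑_{i<L} q^i] ≤ E[L] < 1`. By dominated convergence `w(x) → E[L]`, so
`P(H > x) = P(X > x) / (1 - w(x))`: the ratio tends to `1 / (1 - E[L])`, and dividing the slowly
varying factor of `X` by `1 - w(x)` keeps it slowly varying.
-/

section HawkesCluster

open scoped ENNReal
open Set

namespace SlowlyVarying

variable {L L' f : ℝ → ℝ}

lemma congr_of_pos (hL : SlowlyVarying L) (h : ∀ x > 0, L x = L' x) : SlowlyVarying L' := by
  refine ⟨fun x hx => h x hx ▸ hL.1 x hx, fun c hc => (hL.2 c hc).congr' ?_⟩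
  filter_upwards [eventually_gt_atTop 0] with x hx
  rw [h x hx, h (c * x) (mul_pos hc hx)]

lemma div_of_tendsto {l : ℝ} (hL : SlowlyVarying L) (hf : ∀ x > 0, 0 < f x)
    (hlim : Tendsto f atTop (𝓝 l)) (hl : l ≠ 0) : SlowlyVarying fun x => L x / f x := by
  refine ⟨fun x hx => div_pos (hL.1 x hx) (hf x hx), fun c hc => ?_⟩
  have hscaled : Tendsto (fun x => f x / f (c * x)) atTop (𝓝 1) := by
    have := hlim.div (hlim.comp (tendsto_id.const_mul_atTop hc)) hl
    rwa [div_self hl] at this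
  refine ((hL.2 c hc).mul hscaled).congr' ?_ |>.trans (by rw [mul_one])
  filter_upwards [eventually_gt_atTop 0] with x hx
  have := (hL.1 x hx).ne'
  have := (hf x hx).ne'
  have := (hf (c * x) (mul_pos hc hx)).ne'
  field_simp

end SlowlyVarying

section RegVarying

variable {Ω : Type*} [MeasurableSpace Ω] {P : Measure Ω} {Y Z : Ω → ℝ} {α : ℝ}

lemma antitone_tailP [IsFiniteMeasure P] : Antitone (tailP P Z) := fun _ _ hxy =>
  ENNReal.toReal_mono (measure_ne_top P _) (measure_mono fun _ h => lt_of_le_of_lt hxy h)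

lemma RegVarying.tailP_pos (hZ : RegVarying P Z α) {x : ℝ} (hx : 0 < x) : 0 < tailP P Z x := by
  obtain ⟨L, -, hL, hZL⟩ := hZ
  rw [hZL x hx]
  exact mul_pos (Real.rpow_pos_of_pos hx _) (hL.1 x hx)

lemma regVarying_of_slowlyVarying [IsFiniteMeasure P]
    (h : SlowlyVarying fun x => x ^ α * tailP P Z x) : RegVarying P Z α := by
  refine ⟨fun x => x ^ α * tailP P Z x, (measurable_id.pow_const α).mul antitone_tailP.measurable,
    h, fun x hx => ?_⟩
  rw [← mul_assoc, ← Real.rpow_add hx, neg_add_cancel, Real.rpow_zero, one_mul]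

lemma RegVarying.of_tailP_mul_eq [IsFiniteMeasure P] {f : ℝ → ℝ} {l : ℝ} (hZ : RegVarying P Z α)
    (hYZ : ∀ x > 0, tailP P Y x * f x = tailP P Z x) (hf : Tendsto f atTop (𝓝 l)) (hl : l ≠ 0) :
    RegVarying P Y α := by
  have hf_pos : ∀ x > 0, 0 < f x := fun x hx =>
    pos_of_mul_pos_right ((hYZ x hx).symm ▸ hZ.tailP_pos hx) ENNReal.toReal_nonneg
  obtain ⟨L, -, hL, hZL⟩ := hZ
  refine regVarying_of_slowlyVarying ((hL.div_of_tendsto hf_pos hf hl).congr_of_pos fun x hx => ?_)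
  have hY : tailP P Y x = x ^ (-α) * L x / f x := by
    rw [← hZL x hx, ← hYZ x hx, mul_div_cancel_right₀ _ (hf_pos x hx).ne']
  rw [hY, mul_div_assoc, ← mul_assoc, ← Real.rpow_add hx, add_neg_cancel, Real.rpow_zero, one_mul]

lemma tendsto_tailP_div_of_tailP_mul_eq {f : ℝ → ℝ} {l : ℝ} (hZ : ∀ x > 0, 0 < tailP P Z x)
    (hYZ : ∀ x > 0, tailP P Y x * f x = tailP P Z x) (hf : Tendsto f atTop (𝓝 l)) (hl : l ≠ 0) :
    Tendsto (fun x => tailP P Y x / tailP P Z x) atTop (𝓝 (1 / l)) := by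
  refine (tendsto_const_nhds.div hf hl).congr' ?_
  filter_upwards [eventually_gt_atTop 0] with x hx
  have hY : tailP P Y x ≠ 0 := left_ne_zero_of_mul ((hYZ x hx).symm ▸ (hZ x hx).ne')
  rw [← hYZ x hx, div_mul_cancel_left₀ hY]
  exact one_div _

end RegVarying

section Decomposition

variable {Ω : Type*} [MeasurableSpace Ω] {P : Measure Ω} {L : Ω → ℕ}

lemma measure_eq_tsum_preimage_singleton_inter (hL : Measurable L) (s : Set Ω) :
    P s = ∑' n, P (L ⁻¹' {n} ∩ s) := by
  have hcover : ⋃ n, L ⁻¹' {n} = univ := by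
    rw [← preimage_iUnion, iUnion_of_singleton, preimage_univ]
  rw [← Measure.restrict_apply_univ, ← hcover,
    measure_iUnion (pairwise_disjoint_fiber L) fun n => hL (measurableSet_singleton n)]
  exact tsum_congr fun n => Measure.restrict_apply (hL (measurableSet_singleton n))

lemma lintegral_indicator_comp_eq_tsum (hL : Measurable L) {s : Set Ω} (hs : MeasurableSet s)
    (g : ℕ → ℝ≥0∞) :
    ∫⁻ ω, s.indicator (fun ω => g (L ω)) ω ∂P = ∑' n, g n * P (L ⁻¹' {n} ∩ s) := by
  rw [lintegral_indicator hs, ← lintegral_map Measurable.of_discrete hL, lintegral_countable']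
  refine tsum_congr fun n => ?_
  rw [Measure.map_apply hL (measurableSet_singleton n),
    Measure.restrict_apply (hL (measurableSet_singleton n))]

end Decomposition

lemma ENNReal.toReal_mul_one_sub_of_eq_add_mul {t s w : ℝ≥0∞} (ht : t ≠ ∞) (hw : w ≠ ∞)
    (h : t = s + t * w) : t.toReal * (1 - w.toReal) = s.toReal := by
  have hs : s ≠ ∞ := ne_top_of_le_ne_top ht (h ▸ le_self_add)
  have := congrArg ENNReal.toReal h
  rw [ENNReal.toReal_add hs (ENNReal.mul_ne_top ht hw), ENNReal.toReal_mul] at this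
  linarith

lemma add_pow_mul_geom_sum_eq_one {R : Type*} [CommSemiring R] {q t : R} (h : q + t = 1) (n : ℕ) :
    q ^ n + t * ∑ i ∈ Finset.range n, q ^ i = 1 := by
  have := (Commute.all t q).geom_sum₂_mul_add n
  rw [add_comm t q, h, one_pow] at this
  simp only [one_pow, one_mul, Finset.sum_range_reflect (fun i => q ^ i) n] at this
  rw [← this, add_comm, mul_comm]

lemma Real.iSup_le_iff_of_nonneg {ι : Sort*} [Finite ι] {f : ι → ℝ} {x : ℝ} (hx : 0 ≤ x) :
    ⨆ i, f i ≤ x ↔ ∀ i, f i ≤ x :=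
  ⟨fun h i => (le_ciSup (Set.finite_range f).bddAbove i).trans h, fun h => Real.iSup_le h hx⟩

lemma ProbabilityTheory.iIndepFun.measure_biInter_preimage_eq_pow {Ω ι β : Type*}
    [MeasurableSpace Ω] [MeasurableSpace β] {P : Measure Ω} {Hs : ι → Ω → β}
    (h : iIndepFun Hs P) {t : Set β} (ht : MeasurableSet t) {q : ℝ≥0∞}
    (hq : ∀ j, P (Hs j ⁻¹' t) = q) (S : Finset ι) :
    P (⋂ j ∈ S, Hs j ⁻¹' t) = q ^ S.card := by
  rw [h.measure_inter_preimage_eq_mul S fun _ _ => ht, Finset.prod_congr rfl fun j _ => hq j,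
    Finset.prod_const]

variable {Ω : Type*} [MeasurableSpace Ω] {P : Measure Ω} {X : Ω → ℝ} {L : Ω → ℕ}
  {Hs : ℕ → Ω → ℝ} {x : ℝ} {q : ℝ≥0∞}

lemma measure_max_iSup_le_eq_lintegral (hx : 0 ≤ x) (hX : Measurable X) (hL : Measurable L)
    (hiid : iIndepFun Hs P) (hq : ∀ j, P (Hs j ⁻¹' Iic x) = q)
    (hind : IndepFun (fun ω => (X ω, L ω)) (fun ω j => Hs j ω) P) :
    P {ω | max (X ω) (⨆ j : Fin (L ω), Hs j ω) ≤ x}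
      = ∫⁻ ω, {ω | X ω ≤ x}.indicator (fun ω => q ^ L ω) ω ∂P := by
  rw [measure_eq_tsum_preimage_singleton_inter hL,
    lintegral_indicator_comp_eq_tsum hL (measurableSet_le hX measurable_const)]
  refine tsum_congr fun n => ?_
  have hsplit : L ⁻¹' {n} ∩ {ω | max (X ω) (⨆ j : Fin (L ω), Hs j ω) ≤ x}
      = (fun ω => (X ω, L ω)) ⁻¹' (Iic x ×ˢ {n})
        ∩ (fun ω j => Hs j ω) ⁻¹' ⋂ j ∈ Finset.range n, (fun h => h j) ⁻¹' Iic x := by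
    ext ω
    simp only [mem_inter_iff, Set.mem_preimage, mem_singleton_iff, mem_ofPred_eq, max_le_iff,
      Real.iSup_le_iff_of_nonneg hx, Set.mem_prod, Set.mem_Iic, mem_iInter, Finset.mem_range]
    constructor
    · rintro ⟨rfl, hXx, hHx⟩
      exact ⟨⟨hXx, rfl⟩, fun j hj => hHx ⟨j, hj⟩⟩
    · rintro ⟨⟨hXx, rfl⟩, hHx⟩
      exact ⟨rfl, hXx, fun j => hHx j j.2⟩
  have hXL : (fun ω => (X ω, L ω)) ⁻¹' (Iic x ×ˢ {n}) = L ⁻¹' {n} ∩ {ω | X ω ≤ x} := by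
    ext ω
    exact and_comm
  rw [hsplit, hind.measure_inter_preimage_eq_mul (Iic x ×ˢ {n})
      (⋂ j ∈ Finset.range n, (fun h => h j) ⁻¹' Iic x)
      (measurableSet_Iic.prod (measurableSet_singleton n))
      (.biInter (to_countable _) fun j _ => measurable_pi_apply j measurableSet_Iic),
    preimage_iInter₂, hXL, mul_comm]
  congr 1
  exact (hiid.measure_biInter_preimage_eq_pow measurableSet_Iic hq (Finset.range n)).trans
    (by rw [Finset.card_range])

noncomputable def geomWeight (P : Measure Ω) (X : Ω → ℝ) (L : Ω → ℕ) (q : ℝ≥0∞) (x : ℝ) :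
    ℝ≥0∞ :=
  ∫⁻ ω, {ω | X ω ≤ x}.indicator (fun ω => ∑ i ∈ Finset.range (L ω), q ^ i) ω ∂P

lemma indicator_sum_pow_le_natCast {Ω : Type*} {X : Ω → ℝ} {L : Ω → ℕ} {x : ℝ} {q : ℝ≥0∞}
    (hq : q ≤ 1) (ω : Ω) :
    {ω | X ω ≤ x}.indicator (fun ω => ∑ i ∈ Finset.range (L ω), q ^ i) ω ≤ L ω :=
  (indicator_le_self _ _ ω).trans <|
    (Finset.sum_le_sum fun i _ => pow_le_one' hq i).trans (by simp)

lemma geomWeight_le (hq : q ≤ 1) : geomWeight P X L q x ≤ ∫⁻ ω, (L ω : ℝ≥0∞) ∂P :=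
  lintegral_mono (indicator_sum_pow_le_natCast hq)

lemma tendsto_geomWeight (hX : Measurable X) (hL : Measurable L) {q : ℝ → ℝ≥0∞}
    (hq1 : ∀ x, q x ≤ 1) (hq : Tendsto q atTop (𝓝 1)) (hL_fin : ∫⁻ ω, (L ω : ℝ≥0∞) ∂P ≠ ∞) :
    Tendsto (fun x => geomWeight P X L (q x) x) atTop (𝓝 (∫⁻ ω, (L ω : ℝ≥0∞) ∂P)) := by
  refine tendsto_lintegral_filter_of_dominated_convergence _
    (.of_forall fun x => Measurable.indicator (by fun_prop) (measurableSet_le hX measurable_const))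
    (.of_forall fun x => ae_of_all _ (indicator_sum_pow_le_natCast (hq1 x))) hL_fin
    (ae_of_all _ fun ω => ?_)
  have hsum : Tendsto (fun x => ∑ i ∈ Finset.range (L ω), q x ^ i) atTop (𝓝 (L ω)) := by
    simpa using tendsto_finsetSum (Finset.range (L ω)) fun i _ => ENNReal.Tendsto.pow (n := i) hq
  refine hsum.congr' ?_
  filter_upwards [eventually_ge_atTop (X ω)] with x hx
  rw [indicator_of_mem (show ω ∈ {ω | X ω ≤ x} from hx)]

lemma measure_le_add_measure_lt [IsProbabilityMeasure P] {Y : Ω → ℝ} (hY : Measurable Y) (x : ℝ) :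
    P {ω | Y ω ≤ x} + P {ω | x < Y ω} = 1 := by
  have := prob_add_prob_compl (μ := P) (hY (measurableSet_Iic : MeasurableSet (Iic x)))
  rwa [← preimage_compl, compl_Iic] at this

lemma lintegral_natCast_eq_ofReal_integral (hL : Integrable (fun ω => (L ω : ℝ)) P) :
    ∫⁻ ω, (L ω : ℝ≥0∞) ∂P = ENNReal.ofReal (∫ ω, (L ω : ℝ) ∂P) := by
  rw [ofReal_integral_eq_lintegral_ofReal hL (ae_of_all _ fun ω => Nat.cast_nonneg _)]
  simp

lemma tendsto_measure_le_atTop [IsProbabilityMeasure P] {Y : Ω → ℝ} (hY : Measurable Y) :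
    Tendsto (fun x => P {ω | Y ω ≤ x}) atTop (𝓝 1) := by
  have := tendsto_measure_Iic_atTop (P.map Y)
  simp_rw [Measure.map_apply hY measurableSet_Iic] at this
  rwa [Measure.map_apply hY .univ, preimage_univ, measure_univ] at this

variable {H : Ω → ℝ}

lemma measure_lt_eq_add_mul_geomWeight [IsProbabilityMeasure P] (hx : 0 ≤ x) (hX : Measurable X)
    (hL : Measurable L) (hH : Measurable H) (hiid : iIndepFun Hs P)
    (hHs : ∀ j, IdentDistrib (Hs j) H P P)
    (hind : IndepFun (fun ω => (X ω, L ω)) (fun ω j => Hs j ω) P)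
    (hfix : IdentDistrib H (fun ω => max (X ω) (⨆ j : Fin (L ω), Hs (j : ℕ) ω)) P P) :
    P {ω | x < H ω}
      = P {ω | x < X ω} + P {ω | x < H ω} * geomWeight P X L (P {ω | H ω ≤ x}) x := by
  set q := P {ω | H ω ≤ x}
  set t := P {ω | x < H ω}
  have hqt : q + t = 1 := measure_le_add_measure_lt hH x
  have hmax : q = ∫⁻ ω, {ω | X ω ≤ x}.indicator (fun ω => q ^ L ω) ω ∂P :=
    (hfix.measure_mem_eq measurableSet_Iic).trans <| measure_max_iSup_le_eq_lintegral hx hX hL hiid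
      (fun j => (hHs j).measure_mem_eq measurableSet_Iic) hind
  have hXs : MeasurableSet {ω | X ω ≤ x} := measurableSet_le hX measurable_const
  have hXle : P {ω | X ω ≤ x} = q + t * geomWeight P X L q x := by
    calc P {ω | X ω ≤ x}
        = ∫⁻ ω, ({ω | X ω ≤ x}.indicator (fun ω => q ^ L ω) ω
            + t * {ω | X ω ≤ x}.indicator (fun ω => ∑ i ∈ Finset.range (L ω), q ^ i) ω) ∂P := by
          rw [← lintegral_indicator_one hXs]
          congr with ω
          by_cases hω : ω ∈ {ω | X ω ≤ x} <;> simp [hω, add_pow_mul_geom_sum_eq_one hqt]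
      _ = q + t * geomWeight P X L q x := by
          rw [lintegral_add_left (Measurable.indicator (by fun_prop) hXs),
            lintegral_const_mul _ (Measurable.indicator (by fun_prop) hXs), ← hmax]
          rfl
  have hX1 := measure_le_add_measure_lt (P := P) hX x
  rw [hXle] at hX1
  refine (ENNReal.add_right_inj (measure_ne_top P {ω | H ω ≤ x})).1 ?_
  rw [hqt, ← hX1]
  ring

end HawkesCluster

theorem tail_max_hawkes_general
    {Ω : Type*} [MeasurableSpace Ω] (P : Measure Ω) [IsProbabilityMeasure P]
    (α : ℝ)
    (X : Ω → ℝ) (Lnum : Ω → ℕ)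
    (hXmeas : Measurable X) (hLmeas : Measurable Lnum)
    (hXrv : RegVarying P X α)
    (hLint : Integrable (fun ω => (Lnum ω : ℝ)) P)
    (hEL : ∫ ω, (Lnum ω : ℝ) ∂P < 1)
    (H : Ω → ℝ) (Hs : ℕ → Ω → ℝ)
    (hHmeas : Measurable H)
    (hHsid : ∀ j, IdentDistrib (Hs j) H P P)
    (hHsiid : iIndepFun Hs P)
    (hind : IndepFun (fun ω => (X ω, Lnum ω)) (fun ω j => Hs j ω) P)
    (hfix : IdentDistrib H (fun ω => max (X ω) (⨆ j : Fin (Lnum ω), Hs (j : ℕ) ω)) P P) :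
    Tendsto (fun x => tailP P H x / tailP P X x) atTop
      (𝓝 (1 / (1 - ∫ ω, (Lnum ω : ℝ) ∂P))) ∧
    RegVarying P H α := by
  set w : ℝ → ENNReal := fun x => geomWeight P X Lnum (P {ω | H ω ≤ x}) x
  have hEL_ofReal := lintegral_natCast_eq_ofReal_integral hLint
  have hEL_ne_top : ∫⁻ ω, (Lnum ω : ENNReal) ∂P ≠ ⊤ := hEL_ofReal ▸ ENNReal.ofReal_ne_top
  have hw : Tendsto (fun x => (w x).toReal) atTop (𝓝 (∫ ω, (Lnum ω : ℝ) ∂P)) := by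
    have := (ENNReal.tendsto_toReal hEL_ne_top).comp <| tendsto_geomWeight hXmeas hLmeas
      (fun _ => prob_le_one (μ := P)) (tendsto_measure_le_atTop hHmeas) hEL_ne_top
    rwa [hEL_ofReal, ENNReal.toReal_ofReal (integral_nonneg fun ω => Nat.cast_nonneg _)] at this
  have hHX : ∀ x > 0, tailP P H x * (1 - (w x).toReal) = tailP P X x := fun x hx =>
    ENNReal.toReal_mul_one_sub_of_eq_add_mul (measure_ne_top _ _)
      (ne_top_of_le_ne_top hEL_ne_top (geomWeight_le (prob_le_one (μ := P))))
      (measure_lt_eq_add_mul_geomWeight hx.le hXmeas hLmeas hHmeas hHsiid hHsid hind hfix)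
  have hlim := (tendsto_const_nhds (x := (1 : ℝ))).sub hw
  have hlim_ne : 1 - ∫ ω, (Lnum ω : ℝ) ∂P ≠ 0 := by linarith
  exact ⟨tendsto_tailP_div_of_tailP_mul_eq (fun _ => hXrv.tailP_pos) hHX hlim hlim_ne,
    hXrv.of_tailP_mul_eq hHX hlim hlim_ne⟩

/-- Tail asymptotics for the maximum of the marks of a generic cluster in the Hawkes process:
`H =d max(X, max_{1≤j≤L} H_j)` implies `P(H > x) ∼ P(X > x)/(1 - E[L])`, and `H` is
regularly varying with the same index. -/
theorem tail_max_hawkes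
    {Ω : Type*} [MeasurableSpace Ω] (P : Measure Ω) [IsProbabilityMeasure P]
    (α : ℝ) (hα : 1 < α)
    (X : Ω → ℝ) (Lnum : Ω → ℕ)
    (hXmeas : Measurable X) (hLmeas : Measurable Lnum)
    (hXnn : ∀ ω, 0 ≤ X ω)
    (hXrv : RegVarying P X α)
    (hLint : Integrable (fun ω => (Lnum ω : ℝ)) P)
    (hEL : ∫ ω, (Lnum ω : ℝ) ∂P < 1)
    (H : Ω → ℝ) (Hs : ℕ → Ω → ℝ)
    (hHmeas : Measurable H) (hHsmeas : ∀ j, Measurable (Hs j))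
    (hHnn : ∀ ω, 0 ≤ H ω) (hHsnn : ∀ j ω, 0 ≤ Hs j ω)
    (hHsid : ∀ j, IdentDistrib (Hs j) H P P)
    (hHsiid : iIndepFun Hs P)
    (hind : IndepFun (fun ω => (X ω, Lnum ω)) (fun ω j => Hs j ω) P)
    (hfix : IdentDistrib H (fun ω => max (X ω) (⨆ j : Fin (Lnum ω), Hs (j : ℕ) ω)) P P) :
    Tendsto (fun x => tailP P H x / tailP P X x) atTop
      (𝓝 (1 / (1 - ∫ ω, (Lnum ω : ℝ) ∂P))) ∧
    RegVarying P H α :=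
  tail_max_hawkes_general P α X Lnum hXmeas hLmeas hXrv hLint hEL H Hs hHmeas hHsid hHsiid hind hfix
end

section
/- Let (X, κ) be a pair of nonnegative random variables, jointly regularly varying with noninteger index α > 1, with slowly varying function L and limit function w. Let N ∈ ℕ-valued be conditionally Poisson with parameter κ given (X, κ). Then for all t₁, t₂ ≥ 0, lim_{x→∞} P(t₁X + t₂N > x)/(x^{-α}L(x)) = w(t₁,t₂); consequently the pair (X, N) is jointly regularly varying with the same index α and the same limit function w. -/
open MeasureTheory ProbabilityTheory Filter Topology Asymptotics

/-- A pair `(X, K)` of nonnegative random variables is jointly regularly varying with index `α`,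
slowly varying function `L` and limit function `w` if for all `t₁, t₂ ≥ 0`,
`P(t₁X + t₂K > x)/(x^{-α}L(x)) → w(t₁,t₂)`, with `w(t₁,t₂) > 0` for at least one pair. -/
def JointRegVarying {Ω : Type*} [MeasurableSpace Ω] (P : Measure Ω)
    (X K : Ω → ℝ) (α : ℝ) (L : ℝ → ℝ) (w : ℝ → ℝ → ℝ) : Prop :=
  Measurable L ∧ SlowlyVarying L ∧
  (∀ t₁ ≥ (0 : ℝ), ∀ t₂ ≥ (0 : ℝ),
    Tendsto (fun x => tailP P (fun ω => t₁ * X ω + t₂ * K ω) x / (x ^ (-α) * L x))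
      atTop (𝓝 (w t₁ t₂))) ∧
  (∃ t₁ ≥ (0 : ℝ), ∃ t₂ ≥ (0 : ℝ), 0 < w t₁ t₂)

/-- `N` is conditionally Poisson with parameter `κ` given `(X, κ)`:
`E[1_{N = k} | σ(X, κ)] = κ^k e^{-κ}/k!` a.s. for every `k`. -/
def CondPoisson {Ω : Type*} [MeasurableSpace Ω] (P : Measure Ω)
    (X κ : Ω → ℝ) (N : Ω → ℕ) : Prop :=
  ∀ k : ℕ,
    P[(fun ω => if N ω = k then (1 : ℝ) else 0) |
        MeasurableSpace.comap (fun ω => (X ω, κ ω)) inferInstance]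
      =ᵐ[P] fun ω => κ ω ^ k * Real.exp (-κ ω) / (Nat.factorial k : ℝ)

/-!
Given `κ`, the count `N` is Poisson with mean `κ`, and the Chernoff bound
`y ^ k e^{-y} / k! ≤ exp ((s - 1) y - k log s)` with rate `klFun s = s log s - s + 1 > 0` shows
that the events on which `N` leaves `[(1 - δ) κ, (1 + δ) κ]` while `N` or `κ` is of order `x` have
probability `O(e^{-cx})`. Off these events `t₁ X + t₂ N` exceeds `x` only if `t₁ X + t₂ κ`
exceeds `(1 - δ) x`, and does so whenever `t₁ X + t₂ κ` exceeds `x / (1 - δ)`; by regular variation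
these tails are asymptotic to `(1 - δ) ^ (∓α) w(t₁, t₂) x ^ (-α) L(x)`. The normalisation
`x ^ (-α) L(x)` decays only polynomially, being comparable to a nondegenerate tail, which is
antitone and loses at most a fixed factor under doubling; so the exponential errors vanish, and
`δ → 0` gives the limit.
-/

open InformationTheory

lemma InformationTheory.klFun_pos {s : ℝ} (hs : 0 ≤ s) (hs1 : s ≠ 1) : 0 < klFun s :=
  (klFun_nonneg hs).lt_of_ne fun h => hs1 ((klFun_eq_zero_iff hs).1 h.symm)

section PoissonChernoff

variable {s y : ℝ}

lemma pow_mul_exp_neg_div_factorial_le (hs : 0 < s) (hy : 0 ≤ y) (k : ℕ) :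
    y ^ k * Real.exp (-y) / (Nat.factorial k : ℝ) ≤ Real.exp ((s - 1) * y - k * Real.log s) := by
  have h := Real.pow_div_factorial_le_exp (x := s * y) (mul_nonneg hs.le hy) k
  rw [mul_pow, div_le_iff₀ (by positivity)] at h
  have hexp : Real.exp ((s - 1) * y - k * Real.log s)
      = Real.exp (s * y) * Real.exp (-y) / s ^ k := by
    rw [← Real.exp_add, ← Real.exp_log (pow_pos hs k), ← Real.exp_sub, Real.log_pow]
    ring_nf
  rw [hexp, div_le_div_iff₀ (by positivity) (by positivity)]
  nlinarith [Real.exp_pos (-y)]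

lemma pow_mul_exp_neg_div_factorial_le_of_mul_le {k : ℕ} (hs : 1 < s) (hy : 0 ≤ y)
    (hk : s * y ≤ k) :
    y ^ k * Real.exp (-y) / (Nat.factorial k : ℝ) ≤ Real.exp (-(klFun s / s) * k) := by
  refine (pow_mul_exp_neg_div_factorial_le (s := s) (by linarith) hy k).trans
    (Real.exp_le_exp.2 ?_)
  have hyk : y ≤ k / s := by rw [le_div_iff₀ (by linarith)]; linarith
  rw [klFun_apply]
  field_simp
  nlinarith

lemma pow_mul_exp_neg_div_factorial_le_of_le_mul {k : ℕ} (hs0 : 0 < s) (hs1 : s < 1)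
    (hy : 0 ≤ y) (hk : (k : ℝ) ≤ s * y) :
    y ^ k * Real.exp (-y) / (Nat.factorial k : ℝ) ≤ Real.exp (-klFun s * y) := by
  refine (pow_mul_exp_neg_div_factorial_le hs0 hy k).trans (Real.exp_le_exp.2 ?_)
  have hlog : Real.log s < 0 := Real.log_neg hs0 hs1
  rw [klFun_apply]
  nlinarith

end PoissonChernoff

lemma exp_neg_mul_le_pow_mul_exp {h m b : ℝ} {k : ℕ} (hh : 0 ≤ h) (hk : (k : ℝ) ≤ m)
    (hb : b ≤ m) : Real.exp (-h * m) ≤ Real.exp (-h / 2) ^ k * Real.exp (-h / 2 * b) := by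
  rw [← Real.exp_nat_mul, ← Real.exp_add]
  exact Real.exp_le_exp.2 (by nlinarith)

namespace CondPoisson

variable {Ω : Type*} [MeasurableSpace Ω] {P : Measure Ω} [IsProbabilityMeasure P]
  {X κ : Ω → ℝ} {N : Ω → ℕ} {δ t : ℝ}

lemma measureReal_inter_preimage (hN : CondPoisson P X κ N) (hX : Measurable X)
    (hκ : Measurable κ) (hNm : Measurable N) (k : ℕ) {B : Set ℝ} (hB : MeasurableSet B) :
    P.real ({ω | N ω = k} ∩ κ ⁻¹' B)
      = ∫ ω in κ ⁻¹' B, κ ω ^ k * Real.exp (-κ ω) / (Nat.factorial k : ℝ) ∂P := by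
  have hm : MeasurableSpace.comap (fun ω => (X ω, κ ω)) inferInstance ≤ ‹MeasurableSpace Ω› :=
    (hX.prodMk hκ).comap_le
  have hBm : MeasurableSet[MeasurableSpace.comap (fun ω => (X ω, κ ω)) inferInstance]
      (κ ⁻¹' B) := ⟨Set.univ ×ˢ B, MeasurableSet.univ.prod hB, by ext; simp⟩
  have hNk : MeasurableSet {ω | N ω = k} := hNm (measurableSet_singleton k)
  have hind : (fun ω => if N ω = k then (1 : ℝ) else 0) = {ω | N ω = k}.indicator 1 := by
    ext ω; simp [Set.indicator_apply]
  rw [← integral_congr_ae (ae_restrict_of_ae (hN k)),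
    setIntegral_condExp hm (by rw [hind]; exact (integrable_const 1).indicator hNk) hBm, hind,
    integral_indicator_one hNk, measureReal_restrict_apply hNk]

lemma measureReal_inter_preimage_le (hN : CondPoisson P X κ N) (hX : Measurable X)
    (hκ : Measurable κ) (hNm : Measurable N) (hκnn : ∀ ω, 0 ≤ κ ω) (k : ℕ) {B : Set ℝ}
    (hB : MeasurableSet B) {b : ℝ} (hb : 0 ≤ b)
    (hbound : ∀ y ∈ B, 0 ≤ y → y ^ k * Real.exp (-y) / (Nat.factorial k : ℝ) ≤ b) :
    P.real ({ω | N ω = k} ∩ κ ⁻¹' B) ≤ b := by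
  rw [hN.measureReal_inter_preimage hX hκ hNm k hB]
  refine (Real.le_norm_self _).trans ((norm_setIntegral_le_of_norm_le_const
    (measure_lt_top P _) fun ω hω => ?_).trans (mul_le_of_le_one_right hb measureReal_le_one))
  rw [Real.norm_of_nonneg (by have := hκnn ω; positivity)]
  exact hbound _ hω (hκnn ω)

lemma measureReal_le_of_le_geometric (hN : CondPoisson P X κ N) (hX : Measurable X)
    (hκ : Measurable κ) (hNm : Measurable N) (hκnn : ∀ ω, 0 ≤ κ ω) {R : ℕ → Set ℝ}
    (hR : ∀ k, MeasurableSet (R k)) {ρ D : ℝ} (hρ0 : 0 ≤ ρ) (hρ1 : ρ < 1) (hD : 0 ≤ D)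
    (hbound : ∀ k, ∀ y ∈ R k, 0 ≤ y →
      y ^ k * Real.exp (-y) / (Nat.factorial k : ℝ) ≤ ρ ^ k * D) :
    P.real {ω | κ ω ∈ R (N ω)} ≤ D / (1 - ρ) := by
  have hcover : {ω | κ ω ∈ R (N ω)} ⊆ ⋃ k, {ω | N ω = k} ∩ κ ⁻¹' R k :=
    fun ω hω => Set.mem_iUnion.2 ⟨N ω, rfl, hω⟩
  have hsum : HasSum (fun k : ℕ => ρ ^ k * D) (D / (1 - ρ)) := by
    simpa [div_eq_inv_mul] using (hasSum_geometric_of_lt_one hρ0 hρ1).mul_right D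
  rw [measureReal_def]
  refine ENNReal.toReal_le_of_le_ofReal (div_nonneg hD (by linarith)) ?_
  calc P {ω | κ ω ∈ R (N ω)} ≤ ∑' k, P ({ω | N ω = k} ∩ κ ⁻¹' R k) :=
        (measure_mono hcover).trans (measure_iUnion_le _)
    _ ≤ ∑' k, ENNReal.ofReal (ρ ^ k * D) := ENNReal.tsum_le_tsum fun k =>
        (ENNReal.le_ofReal_iff_toReal_le (measure_ne_top _ _) (by positivity)).2 <|
          hN.measureReal_inter_preimage_le hX hκ hNm hκnn k (hR k) (by positivity) (hbound k)
    _ = ENNReal.ofReal (D / (1 - ρ)) := by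
        rw [← ENNReal.ofReal_tsum_of_nonneg (fun k => by positivity) hsum.summable, hsum.tsum_eq]


lemma exists_upper_deviation_isBigO_exp (hN : CondPoisson P X κ N) (hX : Measurable X)
    (hκ : Measurable κ) (hNm : Measurable N) (hκnn : ∀ ω, 0 ≤ κ ω) (hδ : 0 < δ) (ht : 0 < t) :
    ∃ c > 0, (fun x => P.real {ω | (1 + δ) * κ ω ≤ N ω ∧ δ * x < t * N ω})
      =O[atTop] fun x => Real.exp (-c * x) := by
  set a := klFun (1 + δ) / (1 + δ)
  have ha : 0 < a := div_pos (klFun_pos (by linarith) (by linarith)) (by linarith)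
  refine ⟨a / 2 * (δ / t), by positivity, IsBigO.of_bound (1 - Real.exp (-a / 2))⁻¹
    (Eventually.of_forall fun x => ?_)⟩
  rw [Real.norm_of_nonneg measureReal_nonneg, Real.norm_of_nonneg (Real.exp_pos _).le,
    ← div_eq_inv_mul]
  refine hN.measureReal_le_of_le_geometric (R := fun k => {y | (1 + δ) * y ≤ k ∧ δ * x < t * k})
    hX hκ hNm hκnn (fun k => ?_) (Real.exp_pos _).le (Real.exp_lt_one_iff.2 (by linarith))
    (Real.exp_pos _).le fun k y ⟨hyk, hxk⟩ hy => ?_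
  · exact (measurableSet_le (measurable_id.const_mul _) measurable_const).inter
      (MeasurableSet.const (δ * x < t * k))
  · have hxk' : δ * x / t ≤ k := by rw [div_le_iff₀ ht]; linarith
    calc y ^ k * Real.exp (-y) / (Nat.factorial k : ℝ) ≤ Real.exp (-a * k) :=
          pow_mul_exp_neg_div_factorial_le_of_mul_le (by linarith) hy hyk
      _ ≤ Real.exp (-a / 2) ^ k * Real.exp (-a / 2 * (δ * x / t)) :=
          exp_neg_mul_le_pow_mul_exp ha.le le_rfl hxk'
      _ = Real.exp (-a / 2) ^ k * Real.exp (-(a / 2 * (δ / t)) * x) := by ring_nf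

lemma exists_lower_deviation_isBigO_exp (hN : CondPoisson P X κ N) (hX : Measurable X)
    (hκ : Measurable κ) (hNm : Measurable N) (hκnn : ∀ ω, 0 ≤ κ ω) (hδ0 : 0 < δ) (hδ1 : δ < 1)
    (ht : 0 < t) :
    ∃ c > 0, (fun x => P.real {ω | (N ω : ℝ) ≤ (1 - δ) * κ ω ∧ δ * x < (1 - δ) * t * κ ω})
      =O[atTop] fun x => Real.exp (-c * x) := by
  set h := klFun (1 - δ)
  have hh : 0 < h := klFun_pos (by linarith) (by linarith)
  have hδ1' : 0 < 1 - δ := by linarith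
  refine ⟨h / 2 * (δ / ((1 - δ) * t)), by positivity, IsBigO.of_bound (1 - Real.exp (-h / 2))⁻¹
    (Eventually.of_forall fun x => ?_)⟩
  rw [Real.norm_of_nonneg measureReal_nonneg, Real.norm_of_nonneg (Real.exp_pos _).le,
    ← div_eq_inv_mul]
  refine hN.measureReal_le_of_le_geometric
    (R := fun k => {y | (k : ℝ) ≤ (1 - δ) * y ∧ δ * x < (1 - δ) * t * y})
    hX hκ hNm hκnn (fun k => ?_) (Real.exp_pos _).le (Real.exp_lt_one_iff.2 (by linarith))
    (Real.exp_pos _).le fun k y ⟨hky, hxy⟩ hy => ?_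
  · exact (measurableSet_le measurable_const (measurable_id.const_mul _)).inter
      (measurableSet_lt measurable_const (measurable_id.const_mul _))
  · have hxy' : δ * x / ((1 - δ) * t) ≤ y := by
      rw [div_le_iff₀ (by positivity)]; linarith
    calc y ^ k * Real.exp (-y) / (Nat.factorial k : ℝ) ≤ Real.exp (-h * y) :=
          pow_mul_exp_neg_div_factorial_le_of_le_mul (by linarith) (by linarith) hy hky
      _ ≤ Real.exp (-h / 2) ^ k * Real.exp (-h / 2 * (δ * x / ((1 - δ) * t))) :=
          exp_neg_mul_le_pow_mul_exp hh.le (by nlinarith) hxy'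
      _ = Real.exp (-h / 2) ^ k * Real.exp (-(h / 2 * (δ / ((1 - δ) * t))) * x) := by ring_nf

end CondPoisson

namespace SlowlyVarying

variable {L : ℝ → ℝ}

lemma rpow_mul_pos (hL : SlowlyVarying L) (α : ℝ) {x : ℝ} (hx : 0 < x) : 0 < x ^ (-α) * L x :=
  mul_pos (Real.rpow_pos_of_pos hx _) (hL.1 x hx)

lemma tendsto_rpow_mul_div (hL : SlowlyVarying L) (α : ℝ) {c : ℝ} (hc : 0 < c) :
    Tendsto (fun x => (c * x) ^ (-α) * L (c * x) / (x ^ (-α) * L x)) atTop (𝓝 (c ^ (-α))) := by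
  refine (by simpa using (hL.2 c hc).const_mul (c ^ (-α)) :
    Tendsto (fun x => c ^ (-α) * (L (c * x) / L x)) atTop _).congr' ?_
  filter_upwards [eventually_gt_atTop 0] with x hx
  have := hL.1 x hx
  rw [Real.mul_rpow hc.le hx.le]
  field_simp

lemma tendsto_comp_mul_div (hL : SlowlyVarying L) {α c W : ℝ} {g : ℝ → ℝ} (hc : 0 < c)
    (hg : Tendsto (fun x => g x / (x ^ (-α) * L x)) atTop (𝓝 W)) :
    Tendsto (fun x => g (c * x) / (x ^ (-α) * L x)) atTop (𝓝 (W * c ^ (-α))) := by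
  refine ((hg.comp (tendsto_id.const_mul_atTop hc)).mul (hL.tendsto_rpow_mul_div α hc)).congr' ?_
  filter_upwards [eventually_gt_atTop 0] with x hx
  have := hL.1 x hx
  have := hL.1 _ (mul_pos hc hx)
  have := Real.rpow_pos_of_pos (mul_pos hc hx) (-α)
  simp only [Function.comp_apply, id]
  field_simp

end SlowlyVarying

lemma Antitone.isBigO_rpow_of_le_comp_two_mul {g : ℝ → ℝ} (hg : Antitone g) {r : ℝ}
    (hr : 0 < r) (hpos : ∀ᶠ x in atTop, 0 < g x) (hdouble : ∀ᶠ x in atTop, r * g x ≤ g (2 * x)) :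
    ∃ n : ℕ, (fun x => x ^ (-(n : ℝ))) =O[atTop] g := by
  obtain ⟨n, hn⟩ := exists_pow_lt_of_lt_one hr one_half_lt_one
  obtain ⟨M, hM⟩ := eventually_atTop.1 ((hpos.and hdouble).and (eventually_ge_atTop 1))
  obtain ⟨⟨hgM, -⟩, hM1⟩ := hM M le_rfl
  set ρ := (1 / 2 : ℝ) ^ n
  have hgeom : ∀ k : ℕ, ρ ^ k * g M ≤ g (2 ^ k * M) := by
    intro k
    induction k with
    | zero => simp
    | succ k ih =>
      obtain ⟨⟨hpos, hstep⟩, -⟩ := hM (2 ^ k * M) (le_mul_of_one_le_left (by linarith)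
        (one_le_pow₀ one_le_two))
      calc ρ ^ (k + 1) * g M = ρ * (ρ ^ k * g M) := by ring
        _ ≤ r * g (2 ^ k * M) := mul_le_mul hn.le ih (by positivity) hr.le
        _ ≤ g (2 ^ (k + 1) * M) := by rw [pow_succ, mul_comm _ 2, mul_assoc]; exact hstep
  refine ⟨n, IsBigO.of_bound (ρ * g M * M ^ n)⁻¹ ?_⟩
  filter_upwards [eventually_ge_atTop M] with x hx
  have hx0 : 0 < x := by linarith
  obtain ⟨k, hk, hk'⟩ := exists_nat_pow_near ((one_le_div (by linarith)).2 hx) one_lt_two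
  have hgx : ρ ^ (k + 1) * g M ≤ g x :=
    (hgeom (k + 1)).trans (hg ((div_lt_iff₀ (by linarith)).1 hk').le)
  have hρk : M ^ n * (x ^ n)⁻¹ ≤ ρ ^ k :=
    calc M ^ n * (x ^ n)⁻¹ = ((x / M)⁻¹) ^ n := by rw [inv_div, div_pow, div_eq_mul_inv]
      _ ≤ ((2 ^ k)⁻¹) ^ n := pow_le_pow_left₀ (by positivity) (inv_anti₀ (by positivity) hk) n
      _ = ρ ^ k := by simp only [ρ, one_div, inv_pow, ← pow_mul, mul_comm]
  rw [Real.norm_of_nonneg (Real.rpow_nonneg hx0.le _),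
    Real.norm_of_nonneg ((by positivity : 0 ≤ ρ ^ (k + 1) * g M).trans hgx),
    Real.rpow_neg hx0.le, Real.rpow_natCast, ← div_eq_inv_mul, le_div_iff₀ (by positivity)]
  calc (x ^ n)⁻¹ * (ρ * g M * M ^ n) = ρ * g M * (M ^ n * (x ^ n)⁻¹) := by ring
    _ ≤ ρ * g M * ρ ^ k := by gcongr
    _ = ρ ^ (k + 1) * g M := by ring
    _ ≤ g x := hgx

lemma tailP_antitone {Ω : Type*} [MeasurableSpace Ω] (P : Measure Ω) [IsFiniteMeasure P]
    (Z : Ω → ℝ) : Antitone (tailP P Z) :=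
  fun _ _ hxy => measureReal_mono fun _ hω => lt_of_le_of_lt hxy hω

namespace JointRegVarying

variable {Ω : Type*} [MeasurableSpace Ω] {P : Measure Ω} [IsFiniteMeasure P]
  {X K : Ω → ℝ} {α : ℝ} {L : ℝ → ℝ} {w : ℝ → ℝ → ℝ}

lemma exp_neg_mul_isLittleO (hjrv : JointRegVarying P X K α L w) {c : ℝ} (hc : 0 < c) :
    (fun x => Real.exp (-c * x)) =o[atTop] fun x => x ^ (-α) * L x := by
  obtain ⟨-, hL, hlim, s₁, hs₁, s₂, hs₂, hW⟩ := hjrv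
  set T := tailP P (fun ω => s₁ * X ω + s₂ * K ω)
  have hT : Tendsto (fun x => T x / (x ^ (-α) * L x)) atTop (𝓝 (w s₁ s₂)) := hlim s₁ hs₁ s₂ hs₂
  have hφpos : ∀ᶠ x in atTop, 0 < x ^ (-α) * L x :=
    eventually_gt_atTop 0 |>.mono fun x hx => hL.rpow_mul_pos α hx
  have hTpos : ∀ᶠ x in atTop, 0 < T x := by
    filter_upwards [hT.eventually (eventually_gt_nhds hW), hφpos] with x hx hφ
    exact (div_pos_iff_of_pos_right hφ).1 hx
  have hratio : Tendsto (fun x => T (2 * x) / T x) atTop (𝓝 (2 ^ (-α))) := by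
    have h := (hL.tendsto_comp_mul_div two_pos hT).div hT hW.ne'
    rw [mul_div_cancel_left₀ _ hW.ne'] at h
    refine h.congr' ?_
    filter_upwards [hφpos] with x hφ
    exact div_div_div_cancel_right₀ hφ.ne' _ _
  have hdouble : ∀ᶠ x in atTop, 2 ^ (-α) / 2 * T x ≤ T (2 * x) := by
    filter_upwards [hratio.eventually (eventually_gt_nhds (half_lt_self (by positivity))), hTpos]
      with x hx hTx
    exact ((lt_div_iff₀ hTx).1 hx).le
  obtain ⟨n, hn⟩ :=
    (tailP_antitone P _).isBigO_rpow_of_le_comp_two_mul (by positivity) hTpos hdouble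
  have hTφ : T =O[atTop] fun x => x ^ (-α) * L x :=
    isBigO_of_div_tendsto_nhds (hφpos.mono fun x hx h => absurd h hx.ne') _ hT
  exact (isLittleO_exp_neg_mul_rpow_atTop hc _).trans_isBigO (hn.trans hTφ)

lemma tendsto_div_of_isBigO_exp (hjrv : JointRegVarying P X K α L w) {c : ℝ} (hc : 0 < c)
    {B : ℝ → ℝ} (hB : B =O[atTop] fun x => Real.exp (-c * x)) :
    Tendsto (fun x => B x / (x ^ (-α) * L x)) atTop (𝓝 0) :=
  (hB.trans_isLittleO (hjrv.exp_neg_mul_isLittleO hc)).tendsto_div_nhds_zero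

end JointRegVarying

lemma tendsto_of_forall_eventually_squeeze {ι β : Type*} {p : Filter ι} [p.NeBot]
    {l : Filter β} {f : β → ℝ} {lo up : ι → ℝ} {a : ℝ} (hlo : Tendsto lo p (𝓝 a))
    (hup : Tendsto up p (𝓝 a))
    (h : ∀ᶠ i in p, ∃ g₁ g₂ : β → ℝ, Tendsto g₁ l (𝓝 (lo i)) ∧ Tendsto g₂ l (𝓝 (up i)) ∧
      g₁ ≤ᶠ[l] f ∧ f ≤ᶠ[l] g₂) :
    Tendsto f l (𝓝 a) := by
  refine tendsto_order.2 ⟨fun b hb => ?_, fun b hb => ?_⟩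
  · obtain ⟨i, hi, g₁, -, hg₁, -, hle, -⟩ := ((hlo.eventually (lt_mem_nhds hb)).and h).exists
    filter_upwards [hg₁.eventually (lt_mem_nhds hi), hle] with x h₁ h₂ using h₁.trans_le h₂
  · obtain ⟨i, hi, -, g₂, -, hg₂, -, hle⟩ := ((hup.eventually (gt_mem_nhds hb)).and h).exists
    filter_upwards [hg₂.eventually (gt_mem_nhds hi), hle] with x h₁ h₂ using h₂.trans_lt h₁

section Deviation

variable {Ω : Type*} [MeasurableSpace Ω] {P : Measure Ω} [IsFiniteMeasure P]
  {X κ : Ω → ℝ} {N : Ω → ℕ} {t₁ t₂ δ : ℝ}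

lemma tailP_le_add_upper_deviation (hXnn : ∀ ω, 0 ≤ X ω) (hκnn : ∀ ω, 0 ≤ κ ω)
    (ht₁ : 0 ≤ t₁) (ht₂ : 0 ≤ t₂) (hδ0 : 0 ≤ δ) (hδ1 : δ < 1) (x : ℝ) :
    tailP P (fun ω => t₁ * X ω + t₂ * N ω) x ≤
      tailP P (fun ω => t₁ * X ω + t₂ * κ ω) ((1 - δ) * x) +
        P.real {ω | (1 + δ) * κ ω ≤ N ω ∧ δ * x < t₂ * N ω} := by
  refine (measureReal_mono fun ω hω => ?_).trans (measureReal_union_le _ _)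
  simp only [Set.mem_union, Set.mem_ofPred_eq] at hω ⊢
  by_cases hdev : (1 + δ) * κ ω ≤ N ω ∧ δ * x < t₂ * N ω
  · exact Or.inr hdev
  have hX := mul_nonneg ht₁ (hXnn ω)
  have hκ := mul_nonneg ht₂ (hκnn ω)
  refine Or.inl ?_
  rcases not_and_or.1 hdev with h | h
  · have hx : x < t₁ * X ω + (1 + δ) * (t₂ * κ ω) := by
      nlinarith [mul_le_mul_of_nonneg_left (not_le.1 h).le ht₂]
    nlinarith [mul_lt_mul_of_pos_left hx (sub_pos.2 hδ1), mul_nonneg hδ0 hX,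
      mul_nonneg (mul_nonneg hδ0 hδ0) hκ]
  · nlinarith [not_lt.1 h]

lemma tailP_le_add_lower_deviation (hXnn : ∀ ω, 0 ≤ X ω) (ht₁ : 0 ≤ t₁) (ht₂ : 0 < t₂)
    (hδ0 : 0 ≤ δ) (hδ1 : δ < 1) (x : ℝ) :
    tailP P (fun ω => t₁ * X ω + t₂ * κ ω) ((1 - δ)⁻¹ * x) ≤
      tailP P (fun ω => t₁ * X ω + t₂ * N ω) x +
        P.real {ω | (N ω : ℝ) ≤ (1 - δ) * κ ω ∧ δ * x < (1 - δ) * t₂ * κ ω} := by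
  refine (measureReal_mono fun ω hω => ?_).trans (measureReal_union_le _ _)
  simp only [Set.mem_union, Set.mem_ofPred_eq] at hω ⊢
  rw [inv_mul_lt_iff₀ (by linarith)] at hω
  by_cases hT : x < t₁ * X ω + t₂ * N ω
  · exact Or.inl hT
  have hX := mul_nonneg ht₁ (hXnn ω)
  have hN := mul_nonneg ht₂.le (Nat.cast_nonneg (α := ℝ) (N ω))
  refine Or.inr ⟨le_of_mul_le_mul_left ?_ ht₂, ?_⟩ <;> nlinarith [not_lt.1 hT]

end Deviation

lemma CondPoisson.tendsto_tailP_div {Ω : Type*} [MeasurableSpace Ω] {P : Measure Ω}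
    [IsProbabilityMeasure P] {α : ℝ} {X κ : Ω → ℝ} {L : ℝ → ℝ} {w : ℝ → ℝ → ℝ} {N : Ω → ℕ}
    (hN : CondPoisson P X κ N) (hX : Measurable X) (hκ : Measurable κ) (hNm : Measurable N)
    (hXnn : ∀ ω, 0 ≤ X ω) (hκnn : ∀ ω, 0 ≤ κ ω) (hjrv : JointRegVarying P X κ α L w)
    {t₁ t₂ : ℝ} (ht₁ : 0 ≤ t₁) (ht₂ : 0 < t₂) :
    Tendsto (fun x => tailP P (fun ω => t₁ * X ω + t₂ * N ω) x / (x ^ (-α) * L x)) atTop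
      (𝓝 (w t₁ t₂)) := by
  have hZ := hjrv.2.2.1 t₁ ht₁ t₂ ht₂.le
  have hφ : ∀ x > 0, 0 < x ^ (-α) * L x := fun x hx => hjrv.2.1.rpow_mul_pos α hx
  have hscale : ContinuousAt (fun δ : ℝ => 1 - δ) 0 := continuousAt_const.sub continuousAt_id
  refine tendsto_of_forall_eventually_squeeze (p := 𝓝[>] (0 : ℝ))
    (lo := fun δ => w t₁ t₂ * ((1 - δ)⁻¹) ^ (-α)) (up := fun δ => w t₁ t₂ * (1 - δ) ^ (-α))
    ?lower ?upper ?bounds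
  case bounds =>
    filter_upwards [Ioo_mem_nhdsGT one_pos] with δ ⟨hδ0, hδ1⟩
    obtain ⟨cu, hcu, hup⟩ := hN.exists_upper_deviation_isBigO_exp hX hκ hNm hκnn hδ0 ht₂
    obtain ⟨cl, hcl, hlow⟩ := hN.exists_lower_deviation_isBigO_exp hX hκ hNm hκnn hδ0 hδ1 ht₂
    have hlo := (hjrv.2.1.tendsto_comp_mul_div (inv_pos.2 (sub_pos.2 hδ1)) hZ).sub
      (hjrv.tendsto_div_of_isBigO_exp hcl hlow)
    have hhi := (hjrv.2.1.tendsto_comp_mul_div (sub_pos.2 hδ1) hZ).add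
      (hjrv.tendsto_div_of_isBigO_exp hcu hup)
    rw [sub_zero] at hlo
    rw [add_zero] at hhi
    refine ⟨_, _, hlo, hhi, ?_, ?_⟩
    · filter_upwards [eventually_gt_atTop 0] with x hx
      rw [← sub_div]
      exact div_le_div_of_nonneg_right (sub_le_iff_le_add.2 <|
        tailP_le_add_lower_deviation hXnn ht₁ ht₂ hδ0.le hδ1 x) (hφ x hx).le
    · filter_upwards [eventually_gt_atTop 0] with x hx
      rw [← add_div]
      exact div_le_div_of_nonneg_right
        (tailP_le_add_upper_deviation hXnn hκnn ht₁ ht₂.le hδ0.le hδ1 x) (hφ x hx).le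
  case lower =>
    simpa using ((hscale.inv₀ (by norm_num)).rpow_const (p := -α) (Or.inl (by norm_num))
      |>.const_mul (w t₁ t₂)).tendsto.mono_left nhdsWithin_le_nhds
  case upper =>
    simpa using (hscale.rpow_const (p := -α) (Or.inl (by norm_num))
      |>.const_mul (w t₁ t₂)).tendsto.mono_left nhdsWithin_le_nhds

theorem jointRV_transfer_condPoisson_general
    {Ω : Type*} [MeasurableSpace Ω] (P : Measure Ω) [IsProbabilityMeasure P]
    (α : ℝ)
    (X κ : Ω → ℝ) (L : ℝ → ℝ) (w : ℝ → ℝ → ℝ)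
    (hXmeas : Measurable X) (hκmeas : Measurable κ)
    (hXnn : ∀ ω, 0 ≤ X ω) (hκnn : ∀ ω, 0 ≤ κ ω)
    (hjrv : JointRegVarying P X κ α L w)
    (N : Ω → ℕ) (hNmeas : Measurable N)
    (hN : CondPoisson P X κ N) :
    (∀ t₁ ≥ (0 : ℝ), ∀ t₂ ≥ (0 : ℝ),
      Tendsto (fun x => tailP P (fun ω => t₁ * X ω + t₂ * N ω) x / (x ^ (-α) * L x))
        atTop (𝓝 (w t₁ t₂))) ∧
    JointRegVarying P X (fun ω => (N ω : ℝ)) α L w := by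
  have hlim : ∀ t₁ ≥ (0 : ℝ), ∀ t₂ ≥ (0 : ℝ),
      Tendsto (fun x => tailP P (fun ω => t₁ * X ω + t₂ * N ω) x / (x ^ (-α) * L x))
        atTop (𝓝 (w t₁ t₂)) := by
    intro t₁ ht₁ t₂ ht₂
    rcases ht₂.eq_or_lt with rfl | ht₂
    · simpa using hjrv.2.2.1 t₁ ht₁ 0 le_rfl
    · exact hN.tendsto_tailP_div hXmeas hκmeas hNmeas hXnn hκnn hjrv ht₁ ht₂
  exact ⟨hlim, hjrv.1, hjrv.2.1, hlim, hjrv.2.2.2⟩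

/-- Joint regular variation of `(X, κ)` transfers to `(X, N)` when `N` is conditionally
Poisson with (random) parameter `κ`: the same slowly varying function `L` and the same
limit function `w` work for `(X, N)`. -/
theorem jointRV_transfer_condPoisson
    {Ω : Type*} [MeasurableSpace Ω] (P : Measure Ω) [IsProbabilityMeasure P]
    (α : ℝ) (hα : 1 < α) (hnonint : ∀ n : ℕ, α ≠ n)
    (X κ : Ω → ℝ) (L : ℝ → ℝ) (w : ℝ → ℝ → ℝ)
    (hXmeas : Measurable X) (hκmeas : Measurable κ)
    (hXnn : ∀ ω, 0 ≤ X ω) (hκnn : ∀ ω, 0 ≤ κ ω)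
    (hjrv : JointRegVarying P X κ α L w)
    (N : Ω → ℕ) (hNmeas : Measurable N)
    (hN : CondPoisson P X κ N) :
    (∀ t₁ ≥ (0 : ℝ), ∀ t₂ ≥ (0 : ℝ),
      Tendsto (fun x => tailP P (fun ω => t₁ * X ω + t₂ * N ω) x / (x ^ (-α) * L x))
        atTop (𝓝 (w t₁ t₂))) ∧
    JointRegVarying P X (fun ω => (N ω : ℝ)) α L w :=
  jointRV_transfer_condPoisson_general P α X κ L w hXmeas hκmeas hXnn hκnn hjrv N hNmeas hN
end
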